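/- arXiv:1706.10132 — 2 statements merged into one kernel-verified Lean document; each statement's English description precedes it below -/
import Mathlib

section
/- Let A be the adjacency matrix of a graph G on N nodes (a symmetric N×N real matrix with entries in {0,1} and zero diagonal), let Δ be the diagonal degree matrix and Q = Δ − A the Laplacian, with eigenvalues ordered 0 = μ_N ≤ μ_{N−1} ≤ … ≤ μ_1. Let c ∈ ℝ and θ ≥ 0 satisfy |c − μ_i| ≤ θ for all i with 1 ≤ i ≤ N−1. Then for any pair of Bernoulli vectors w_x, w_y ∈ {0,1}^N with w_xᵀw_y = 0, writing N_x = uᵀw_x and N_y = uᵀw_y, one has |w_xᵀ A w_y − (c/N)·N_x·N_y| ≤ (θ/N)·√(N_x(N−N_x)·N_y(N−N_y)). -/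
/-!
Write `x̂ = w_x - (N_x/N) u` and `ŷ = w_y - (N_y/N) u` for the centred indicator vectors.
Since `Q u = 0` and `w_x, w_y` have disjoint supports, `w_xᵀ A w_y = -w_xᵀ Q w_y = -x̂ᵀ Q ŷ`,
while `x̂ᵀ ŷ = -N_x N_y / N`; hence `w_xᵀ A w_y - (c/N) N_x N_y = x̂ᵀ (c I - Q) ŷ`.
Expanding in the eigenbasis gives `∑ᵢ (c - μᵢ) ⟨zᵢ, x̂⟩ ⟨zᵢ, ŷ⟩`, which Cauchy–Schwarz bounds by
`θ ‖x̂‖ ‖ŷ‖ = (θ/N) √(N_x (N - N_x) N_y (N - N_y))`, provided every eigenvector `zᵢ` with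
`|c - μᵢ| > θ` is orthogonal to `x̂`.
-/

open Matrix

namespace Matrix

variable {n : Type*} [Fintype n]

section Spectral

variable {z : n → n → ℝ} {M : Matrix n n ℝ} {μ : n → ℝ}

theorem sum_dotProduct_mul_dotProduct_of_orthonormal [DecidableEq n]
    (hz : ∀ i j, z i ⬝ᵥ z j = if i = j then (1 : ℝ) else 0) (v w : n → ℝ) :
    ∑ i, (z i ⬝ᵥ v) * (z i ⬝ᵥ w) = v ⬝ᵥ w := by
  have hZ : Matrix.of z * (Matrix.of z)ᵀ = 1 := by
    ext i j
    simpa [Matrix.mul_apply, Matrix.one_apply, dotProduct] using hz i j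
  calc ∑ i, (z i ⬝ᵥ v) * (z i ⬝ᵥ w) = Matrix.of z *ᵥ v ⬝ᵥ Matrix.of z *ᵥ w := rfl
    _ = v ⬝ᵥ w := by
      rw [dotProduct_mulVec, ← mulVec_transpose, mulVec_mulVec, mul_eq_one_comm.mp hZ,
        one_mulVec]

theorem dotProduct_mulVec_eigenvector (hM : M.IsSymm) (hzμ : ∀ i, M *ᵥ z i = μ i • z i)
    (i : n) (w : n → ℝ) : z i ⬝ᵥ M *ᵥ w = μ i * (z i ⬝ᵥ w) := by
  rw [dotProduct_mulVec, ← hM.eq, vecMul_transpose, hzμ, smul_dotProduct, smul_eq_mul]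

theorem dotProduct_mulVec_eq_sum_eigenvalue_mul [DecidableEq n]
    (hz : ∀ i j, z i ⬝ᵥ z j = if i = j then (1 : ℝ) else 0)
    (hM : M.IsSymm) (hzμ : ∀ i, M *ᵥ z i = μ i • z i) (v w : n → ℝ) :
    v ⬝ᵥ M *ᵥ w = ∑ i, μ i * ((z i ⬝ᵥ v) * (z i ⬝ᵥ w)) := by
  rw [← sum_dotProduct_mul_dotProduct_of_orthonormal hz]
  refine Finset.sum_congr rfl fun i _ => ?_
  rw [dotProduct_mulVec_eigenvector hM hzμ]
  ring

theorem abs_sub_dotProduct_mulVec_le [DecidableEq n]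
    (hz : ∀ i j, z i ⬝ᵥ z j = if i = j then (1 : ℝ) else 0)
    (hM : M.IsSymm) (hzμ : ∀ i, M *ᵥ z i = μ i • z i) {c θ : ℝ} (hθ : 0 ≤ θ) {v : n → ℝ}
    (hv : ∀ i, |c - μ i| ≤ θ ∨ z i ⬝ᵥ v = 0) (w : n → ℝ) :
    |c * (v ⬝ᵥ w) - v ⬝ᵥ M *ᵥ w| ≤ θ * (√(v ⬝ᵥ v) * √(w ⬝ᵥ w)) := by
  set a := fun i => z i ⬝ᵥ v
  set b := fun i => z i ⬝ᵥ w
  have hab : c * (v ⬝ᵥ w) - v ⬝ᵥ M *ᵥ w = ∑ i, (c - μ i) * (a i * b i) := by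
    rw [dotProduct_mulVec_eq_sum_eigenvalue_mul hz hM hzμ,
      ← sum_dotProduct_mul_dotProduct_of_orthonormal hz v w, Finset.mul_sum,
      ← Finset.sum_sub_distrib]
    exact Finset.sum_congr rfl fun i _ => by ring
  have hterm : ∀ i, |(c - μ i) * (a i * b i)| ≤ θ * (|a i| * |b i|) := fun i => by
    rw [abs_mul, abs_mul]
    rcases hv i with hi | hi
    · exact mul_le_mul_of_nonneg_right hi (by positivity)
    · simp [a, hi]
  have hsq : ∀ u : n → ℝ, ∑ i, |z i ⬝ᵥ u| ^ 2 = u ⬝ᵥ u := fun u => by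
    simp_rw [sq_abs, sq]
    exact sum_dotProduct_mul_dotProduct_of_orthonormal hz u u
  calc |c * (v ⬝ᵥ w) - v ⬝ᵥ M *ᵥ w|
      ≤ ∑ i, |(c - μ i) * (a i * b i)| := hab ▸ Finset.abs_sum_le_sum_abs _ _
    _ ≤ θ * ∑ i, |a i| * |b i| := by
      rw [Finset.mul_sum]; exact Finset.sum_le_sum fun i _ => hterm i
    _ ≤ θ * (√(v ⬝ᵥ v) * √(w ⬝ᵥ w)) := by
      rw [← hsq v, ← hsq w]
      exact mul_le_mul_of_nonneg_left (Real.sum_mul_le_sqrt_mul_sqrt _ _ _) hθ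

/-- If `0` is a repeated eigenvalue, `|c| ≤ θ` anyway; if it is simple, the kernel vector `u`
spans its eigenspace, so every `v ⟂ u` has no component along `z i₀`. -/
theorem abs_sub_le_or_dotProduct_eq_zero [DecidableEq n]
    (hz : ∀ i j, z i ⬝ᵥ z j = if i = j then (1 : ℝ) else 0)
    (hM : M.IsSymm) (hzμ : ∀ i, M *ᵥ z i = μ i • z i) {u : n → ℝ} (hu : M *ᵥ u = 0)
    (hu0 : u ≠ 0) {i₀ : n} (hμi₀ : μ i₀ = 0) {c θ : ℝ} (hθ : ∀ i ≠ i₀, |c - μ i| ≤ θ)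
    {v : n → ℝ} (hv : v ⬝ᵥ u = 0) (i : n) : |c - μ i| ≤ θ ∨ z i ⬝ᵥ v = 0 := by
  by_cases hi : i = i₀
  swap
  · exact Or.inl (hθ i hi)
  subst hi
  by_cases hrep : ∃ j ≠ i, μ j = 0
  · obtain ⟨j, hji, hμj⟩ := hrep
    left
    simpa [hμi₀, hμj] using hθ j hji
  push Not at hrep
  have hzu : ∀ j ≠ i, z j ⬝ᵥ u = 0 := fun j hj => by
    have := dotProduct_mulVec_eigenvector hM hzμ j u
    rw [hu, dotProduct_zero, eq_comm] at this
    exact (mul_eq_zero.mp this).resolve_left (hrep j hj)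
  have hsingle : ∀ w : n → ℝ, w ⬝ᵥ u = (z i ⬝ᵥ w) * (z i ⬝ᵥ u) := fun w => by
    rw [← sum_dotProduct_mul_dotProduct_of_orthonormal hz w u]
    exact Finset.sum_eq_single i (fun j _ hj => by rw [hzu j hj, mul_zero]) (by simp)
  have hzi : z i ⬝ᵥ u ≠ 0 := fun h => hu0 <| dotProduct_self_eq_zero.mp <| by
    rw [hsingle, h, mul_zero]
  right
  rw [hsingle] at hv
  exact (mul_eq_zero.mp hv).resolve_right hzi

end Spectral

section Laplacian

variable [DecidableEq n] {R : Type*} [CommRing R]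

def laplacian (A : Matrix n n R) : Matrix n n R := diagonal (fun k => ∑ j, A k j) - A

theorem isSymm_laplacian {A : Matrix n n R} (hA : A.IsSymm) : (laplacian A).IsSymm :=
  (isSymm_diagonal _).sub hA

theorem laplacian_mulVec_one (A : Matrix n n R) : laplacian A *ᵥ 1 = 0 := by
  ext k
  simp [laplacian, mulVec, dotProduct, diagonal_apply, Finset.sum_sub_distrib]

theorem dotProduct_diagonal_mulVec_eq_zero {v w d : n → ℝ} (hv : 0 ≤ v) (hw : 0 ≤ w)
    (hvw : v ⬝ᵥ w = 0) : v ⬝ᵥ diagonal d *ᵥ w = 0 := by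
  have hvw' : ∀ k, v k * w k = 0 := fun k =>
    (Finset.sum_eq_zero_iff_of_nonneg fun j _ => mul_nonneg (hv j) (hw j)).mp hvw k
      (Finset.mem_univ k)
  simp only [dotProduct, mulVec_diagonal]
  exact Finset.sum_eq_zero fun k _ => by linear_combination d k * hvw' k

theorem dotProduct_mulVec_eq_neg_laplacian {A : Matrix n n ℝ} {v w : n → ℝ} (hv : 0 ≤ v)
    (hw : 0 ≤ w) (hvw : v ⬝ᵥ w = 0) : v ⬝ᵥ A *ᵥ w = -(v ⬝ᵥ laplacian A *ᵥ w) := by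
  rw [laplacian, sub_mulVec, dotProduct_sub, dotProduct_diagonal_mulVec_eq_zero hv hw hvw,
    zero_sub, neg_neg]

end Laplacian

section Centered

noncomputable def centered (w : n → ℝ) : n → ℝ := w - ((∑ i, w i) / Fintype.card n) • 1

theorem centered_dotProduct_mulVec_centered {M : Matrix n n ℝ} (hM : M.IsSymm)
    (hM1 : M *ᵥ 1 = 0) (v w : n → ℝ) : centered v ⬝ᵥ M *ᵥ centered w = v ⬝ᵥ M *ᵥ w := by
  have h1M : (1 : n → ℝ) ⬝ᵥ M *ᵥ w = 0 := by
    rw [dotProduct_mulVec, ← hM.eq, vecMul_transpose, hM1, zero_dotProduct]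
  simp [centered, mulVec_sub, mulVec_smul, hM1, sub_dotProduct, h1M]

variable [Nonempty n]

theorem centered_dotProduct_one (w : n → ℝ) : centered w ⬝ᵥ 1 = 0 := by
  have : (Fintype.card n : ℝ) ≠ 0 := Nat.cast_ne_zero.mpr Fintype.card_ne_zero
  simp only [centered, dotProduct_one, Pi.sub_apply, Pi.smul_apply, Pi.one_apply, smul_eq_mul,
    mul_one, Finset.sum_sub_distrib, Finset.sum_const, Finset.card_univ, nsmul_eq_mul]
  field_simp
  ring

theorem centered_dotProduct_centered (v w : n → ℝ) :
    centered v ⬝ᵥ centered w = v ⬝ᵥ w - (∑ i, v i) * (∑ i, w i) / Fintype.card n := by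
  have : (Fintype.card n : ℝ) ≠ 0 := Nat.cast_ne_zero.mpr Fintype.card_ne_zero
  simp only [centered, dotProduct_sub, sub_dotProduct, smul_dotProduct, one_dotProduct,
    smul_eq_mul, dotProduct_smul, dotProduct_one, Pi.sub_apply, Pi.smul_apply, Pi.one_apply,
    mul_one, Finset.sum_sub_distrib, Finset.sum_const, Finset.card_univ, nsmul_eq_mul]
  field_simp
  ring

theorem centered_dotProduct_self_of_bernoulli {w : n → ℝ} (hw : ∀ i, w i = 0 ∨ w i = 1) :
    centered w ⬝ᵥ centered w =
      (∑ i, w i) * (Fintype.card n - ∑ i, w i) / Fintype.card n := by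
  have hww : w ⬝ᵥ w = ∑ i, w i :=
    Finset.sum_congr rfl fun i _ => by rcases hw i with h | h <;> simp [h]
  have : (Fintype.card n : ℝ) ≠ 0 := Nat.cast_ne_zero.mpr Fintype.card_ne_zero
  rw [centered_dotProduct_centered, hww]
  field_simp

end Centered

end Matrix

theorem Real.sqrt_div_mul_sqrt_div {p r N : ℝ} (hp : 0 ≤ p) (hN : 0 < N) :
    √(p / N) * √(r / N) = √(p * r) / N := by
  rw [← Real.sqrt_mul (div_nonneg hp hN.le), div_mul_div_comm, Real.sqrt_div' _ (by positivity),
    Real.sqrt_mul_self hN.le]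

/-- Isoperimetric inequality (Lemma: general isoperimetric inequality).
`A` is the adjacency matrix of a simple graph on `N` nodes, `Q = Δ - A` its
Laplacian with eigenvalues `μ 0 ≥ μ 1 ≥ … ≥ μ (N-1) = 0` (so `μ i` is `μ_{i+1}`
in 1-based notation), realized by an orthonormal eigenbasis `z`.  If
`|c - μ_i| ≤ θ` for all eigenvalues except the last one (`μ_N = 0`), then for
any Bernoulli vectors `wx, wy` with `wxᵀ wy = 0` the stated bound holds. -/
theorem isoperimetric_inequality_general
    (N : ℕ) (hN : 0 < N)
    (A : Matrix (Fin N) (Fin N) ℝ)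
    (hAsymm : A.IsSymm)
    (μ : Fin N → ℝ) (z : Fin N → (Fin N → ℝ))
    (hz_orth : ∀ i j, z i ⬝ᵥ z j = if i = j then (1 : ℝ) else 0)
    (hz_eig : ∀ i,
      (Matrix.diagonal (fun k => ∑ j, A k j) - A).mulVec (z i) = μ i • z i)
    (hμ_last : μ ⟨N - 1, by omega⟩ = 0)
    (c θ : ℝ) (hθ0 : 0 ≤ θ)
    (hθ : ∀ i : Fin N, (i : ℕ) < N - 1 → |c - μ i| ≤ θ)
    (wx wy : Fin N → ℝ)
    (hwx : ∀ i, wx i = 0 ∨ wx i = 1)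
    (hwy : ∀ i, wy i = 0 ∨ wy i = 1)
    (horth : wx ⬝ᵥ wy = 0) :
    |wx ⬝ᵥ A.mulVec wy - (c / N) * ((∑ i, wx i) * (∑ i, wy i))| ≤
      (θ / N) * Real.sqrt ((∑ i, wx i) * (N - ∑ i, wx i) *
        ((∑ i, wy i) * (N - ∑ i, wy i))) := by
  have : Nonempty (Fin N) := ⟨⟨0, hN⟩⟩
  have hNpos : (0 : ℝ) < N := Nat.cast_pos.mpr hN
  have hL : (laplacian A).IsSymm := isSymm_laplacian hAsymm
  have hnonneg : ∀ w : Fin N → ℝ, (∀ i, w i = 0 ∨ w i = 1) → 0 ≤ w := fun w hw i => by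
    rcases hw i with h | h <;> simp [h]
  have hθ' : ∀ i ≠ ⟨N - 1, by omega⟩, |c - μ i| ≤ θ := fun i hi =>
    hθ i (by have := i.isLt; have : (i : ℕ) ≠ N - 1 := fun h => hi (Fin.ext h); omega)
  have hcomponents : ∀ i, |c - μ i| ≤ θ ∨ z i ⬝ᵥ centered wx = 0 :=
    abs_sub_le_or_dotProduct_eq_zero hz_orth hL hz_eig (laplacian_mulVec_one A) one_ne_zero
      hμ_last hθ' (centered_dotProduct_one wx)
  have hPx : 0 ≤ (∑ i, wx i) * (N - ∑ i, wx i) := by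
    have h := dotProduct_self_star_nonneg (centered wx)
    rwa [star_trivial, centered_dotProduct_self_of_bernoulli hwx, Fintype.card_fin,
      le_div_iff₀ hNpos, zero_mul] at h
  calc |wx ⬝ᵥ A *ᵥ wy - (c / N) * ((∑ i, wx i) * (∑ i, wy i))|
      = |c * (centered wx ⬝ᵥ centered wy) - centered wx ⬝ᵥ laplacian A *ᵥ centered wy| := by
        rw [centered_dotProduct_centered, centered_dotProduct_mulVec_centered hL
          (laplacian_mulVec_one A), dotProduct_mulVec_eq_neg_laplacian (hnonneg wx hwx)
          (hnonneg wy hwy) horth, horth, Fintype.card_fin]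
        ring_nf
    _ ≤ θ * (√(centered wx ⬝ᵥ centered wx) * √(centered wy ⬝ᵥ centered wy)) :=
        abs_sub_dotProduct_mulVec_le hz_orth hL hz_eig hθ0 hcomponents _
    _ = _ := by
        rw [centered_dotProduct_self_of_bernoulli hwx, centered_dotProduct_self_of_bernoulli hwy,
          Fintype.card_fin, Real.sqrt_div_mul_sqrt_div hPx hNpos]
        ring
end

section
/- Let G be a bi-regular bipartite graph on N = N_k + N_m nodes with parts V_k (of size N_k) and V_m (of size N_m), L links, and adjacency matrix A = [[0, B],[Bᵀ, 0]] where B is an N_k×N_m matrix with entries in {0,1} satisfying Bu = (L/N_k)u and uᵀB = (L/N_m)uᵀ. Let λ_1 ≥ λ_2 ≥ … ≥ λ_N denote the eigenvalues of A. Then for any subsets X ⊆ V_k of size N_x and Y ⊆ V_m of size N_y, the number m of links between X and Y satisfies: (m − (L/(N_k·N_m))·N_x·N_y)² ≤ λ_2²·(N_x(N_k − N_x)·N_y(N_m − N_y))/(N_k·N_m). -/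
/-!
Centre the indicator vectors of `X` and `Y` to `x ⊥ u` and `y ⊥ u`. Then
`m - (L / (Nk Nm)) Nx Ny = xᵀ B y`, `‖x‖² = Nx (Nk - Nx) / Nk` and `‖y‖² = Ny (Nm - Ny) / Nm`.
The vector `p = (√Nm u, √Nk u)` is an eigenvector of `A` for `μ = L / √(Nk Nm)`, and a weighted
AM–GM inequality bounds every Rayleigh quotient of `A` by `μ`, so `λ₁ ≤ μ`. Expanding in the
eigenbasis, every vector orthogonal to an eigenvector with eigenvalue `≥ λ₁` has Rayleigh quotient
at most `λ₂`. Since `(s x, y) ⊥ p`, this gives `2 s xᵀ B y ≤ λ₂ (s² ‖x‖² + ‖y‖²)` for every real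
`s`, and the discriminant of this quadratic in `s` is the claim.
-/

open Matrix Finset

lemma sq_le_of_forall_two_mul_mul_le {Q l a b : ℝ}
    (h : ∀ s, 2 * s * Q ≤ l * (s ^ 2 * a + b)) : Q ^ 2 ≤ l ^ 2 * a * b := by
  have : discrim (l * a) (-2 * Q) (l * b) ≤ 0 := discrim_le_zero fun s => by nlinarith [h s]
  rw [discrim] at this
  nlinarith

lemma sum_mul_sq_le_of_dotProduct_eq_zero {n : ℕ} (hn : 1 < n) {lam : Fin n → ℝ}
    (hlam : Antitone lam) {μ : ℝ} (hμ : lam ⟨0, by omega⟩ ≤ μ) {q c : Fin n → ℝ}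
    (hq : ∀ i, lam i * q i = μ * q i) (hq0 : q ≠ 0) (hqc : q ⬝ᵥ c = 0) :
    ∑ i, lam i * c i ^ 2 ≤ lam ⟨1, hn⟩ * ∑ i, c i ^ 2 := by
  set i₀ : Fin n := ⟨0, by omega⟩
  set i₁ : Fin n := ⟨1, hn⟩
  have hle : ∀ i, i ≠ i₀ → lam i ≤ lam i₁ := fun i hi =>
    hlam (Fin.le_def.mpr (Nat.one_le_iff_ne_zero.mpr fun h => hi (Fin.ext h)))
  have hc₀ : lam i₀ ≤ lam i₁ ∨ c i₀ = 0 := by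
    refine or_iff_not_imp_left.mpr fun hgap => ?_
    -- Each `q i` with `i ≠ i₀` vanishes (its eigenvalue is below `μ`), so `q ⬝ᵥ c = q i₀ * c i₀`.
    have hq_supp : ∀ i, i ≠ i₀ → q i = 0 := fun i hi =>
      (mul_eq_mul_right_iff.mp (hq i)).resolve_left (by linarith [hle i hi])
    have hqi₀ : q i₀ ≠ 0 := fun h =>
      hq0 (funext fun i => if hi : i = i₀ then hi ▸ h else hq_supp i hi)
    have : q i₀ * c i₀ = 0 := by
      rw [← hqc, dotProduct,
        Finset.sum_eq_single i₀ (fun i _ hi => by rw [hq_supp i hi, zero_mul]) (by simp)]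
    exact (mul_eq_zero.mp this).resolve_left hqi₀
  rw [Finset.mul_sum]
  refine Finset.sum_le_sum fun i _ => ?_
  by_cases hi : i = i₀
  · subst hi
    rcases hc₀ with h | h
    · exact mul_le_mul_of_nonneg_right h (sq_nonneg _)
    · simp [h]
  · exact mul_le_mul_of_nonneg_right (hle i hi) (sq_nonneg _)

namespace Matrix

section Spectral

variable {ι : Type*} [Fintype ι] {n : ℕ} {z : Fin n → ι → ℝ}

lemma mul_transpose_eq_one_of_orthonormal (hz : ∀ i j, z i ⬝ᵥ z j = if i = j then 1 else 0) :
    of z * (of z)ᵀ = 1 := by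
  ext i j
  rw [mul_apply', one_apply]
  exact hz i j

lemma le_of_mulVec_eq_smul_of_forall_dotProduct_mulVec_le
    {A : Matrix ι ι ℝ} {v : ι → ℝ} {l μ : ℝ} (hv : A *ᵥ v = l • v) (hv₀ : v ≠ 0)
    (hA : ∀ w, w ⬝ᵥ (A *ᵥ w) ≤ μ * (w ⬝ᵥ w)) : l ≤ μ := by
  have hpos : 0 < v ⬝ᵥ v := by simpa using dotProduct_self_star_pos_iff.mpr hv₀
  have := hA v
  rw [hv, dotProduct_smul, smul_eq_mul] at this
  exact le_of_mul_le_mul_right this hpos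

variable [DecidableEq ι]

lemma transpose_mul_eq_one_of_orthonormal (hcard : Fintype.card ι = n)
    (hz : ∀ i j, z i ⬝ᵥ z j = if i = j then 1 else 0) : (of z)ᵀ * of z = 1 :=
  (mul_eq_one_comm_of_card_eq _ _ _ (by simp [hcard])).mp
    (mul_transpose_eq_one_of_orthonormal hz)

lemma eq_transpose_mul_diagonal_mul_of_eigenvectors (hcard : Fintype.card ι = n)
    (hz : ∀ i j, z i ⬝ᵥ z j = if i = j then 1 else 0) {A : Matrix ι ι ℝ} {lam : Fin n → ℝ}
    (heig : ∀ i, A *ᵥ z i = lam i • z i) : A = (of z)ᵀ * diagonal lam * of z := by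
  have hAM : A * (of z)ᵀ = (of z)ᵀ * diagonal lam := by
    ext a i
    have h := congrFun (heig i) a
    simp only [mulVec, Pi.smul_apply, smul_eq_mul] at h
    simpa [mul_apply', mul_comm] using h
  rw [← hAM, Matrix.mul_assoc, transpose_mul_eq_one_of_orthonormal hcard hz, Matrix.mul_one]

lemma dotProduct_eq_mulVec_dotProduct_mulVec_of_orthonormal (hcard : Fintype.card ι = n)
    (hz : ∀ i j, z i ⬝ᵥ z j = if i = j then 1 else 0) (v w : ι → ℝ) :
    v ⬝ᵥ w = (of z *ᵥ v) ⬝ᵥ (of z *ᵥ w) := by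
  rw [← vecMul_transpose, ← dotProduct_mulVec, mulVec_mulVec,
    transpose_mul_eq_one_of_orthonormal hcard hz, one_mulVec]

theorem dotProduct_mulVec_le_of_orthogonal_eigenvector (hcard : Fintype.card ι = n)
    (hn : 1 < n) (hz : ∀ i j, z i ⬝ᵥ z j = if i = j then 1 else 0) {A : Matrix ι ι ℝ}
    {lam : Fin n → ℝ} (heig : ∀ i, A *ᵥ z i = lam i • z i) (hlam : Antitone lam)
    {p : ι → ℝ} {μ : ℝ} (hp : A *ᵥ p = μ • p) (hp0 : p ≠ 0) (hμ : lam ⟨0, by omega⟩ ≤ μ)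
    {w : ι → ℝ} (hpw : p ⬝ᵥ w = 0) : w ⬝ᵥ (A *ᵥ w) ≤ lam ⟨1, hn⟩ * (w ⬝ᵥ w) := by
  set M := of z
  have hMA : M * A = diagonal lam * M := by
    rw [eq_transpose_mul_diagonal_mul_of_eigenvectors hcard hz heig, ← Matrix.mul_assoc,
      ← Matrix.mul_assoc, mul_transpose_eq_one_of_orthonormal hz, Matrix.one_mul]
  have hcoef : ∀ v, M *ᵥ (A *ᵥ v) = diagonal lam *ᵥ (M *ᵥ v) := fun v => by
    rw [mulVec_mulVec, hMA, ← mulVec_mulVec]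
  have hq : ∀ i, lam i * (M *ᵥ p) i = μ * (M *ᵥ p) i := fun i => by
    have h := congrFun (hcoef p) i
    rw [hp, mulVec_smul, mulVec_diagonal, Pi.smul_apply, smul_eq_mul] at h
    exact h.symm
  have hq0 : M *ᵥ p ≠ 0 := fun h => hp0 <| by
    rw [← one_mulVec p, ← transpose_mul_eq_one_of_orthonormal hcard hz, ← mulVec_mulVec, h,
      mulVec_zero]
  have key := sum_mul_sq_le_of_dotProduct_eq_zero hn hlam hμ hq hq0
    (by rwa [← dotProduct_eq_mulVec_dotProduct_mulVec_of_orthonormal hcard hz])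
  rw [dotProduct_eq_mulVec_dotProduct_mulVec_of_orthonormal hcard hz, hcoef,
    dotProduct_eq_mulVec_dotProduct_mulVec_of_orthonormal hcard hz w w]
  simpa [dotProduct, mulVec_diagonal, sq, mul_left_comm] using key

end Spectral

section Bipartite

variable {κ ν : Type*} [Fintype κ] [Fintype ν] (B : Matrix κ ν ℝ)

lemma sumElim_dotProduct_fromBlocks_mulVec (a : κ → ℝ) (b : ν → ℝ) :
    Sum.elim a b ⬝ᵥ (fromBlocks 0 B Bᵀ 0 *ᵥ Sum.elim a b) = 2 * (a ⬝ᵥ (B *ᵥ b)) := by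
  rw [fromBlocks_mulVec]
  simp only [Sum.elim_comp_inl, Sum.elim_comp_inr, zero_mulVec, zero_add, add_zero,
    sumElim_dotProduct_sumElim]
  rw [dotProduct_mulVec b, vecMul_transpose, dotProduct_comm (B *ᵥ b)]
  ring

variable {B} {r c : ℝ}

lemma fromBlocks_mulVec_sumElim_const (hrow : ∀ i, ∑ j, B i j = r) (hcol : ∀ j, ∑ i, B i j = c)
    {α β μ : ℝ} (hα : r * β = μ * α) (hβ : c * α = μ * β) :
    fromBlocks 0 B Bᵀ 0 *ᵥ Sum.elim (fun _ => α) (fun _ => β) =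
      μ • Sum.elim (fun _ => α) (fun _ => β) := by
  ext (i | j) <;> simp [mulVec, dotProduct, ← Finset.sum_mul, hrow, hcol, hα, hβ]

lemma two_mul_dotProduct_mulVec_le_add (hB : ∀ i j, 0 ≤ B i j) (hrow : ∀ i, ∑ j, B i j = r)
    (hcol : ∀ j, ∑ i, B i j = c) {t : ℝ} (ht : 0 < t) (a : κ → ℝ) (b : ν → ℝ) :
    2 * (a ⬝ᵥ (B *ᵥ b)) ≤ t * r * (a ⬝ᵥ a) + c / t * (b ⬝ᵥ b) := by
  have amgm : ∀ x y : ℝ, 2 * x * y ≤ t * x ^ 2 + y ^ 2 / t := fun x y => by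
    have : t * x ^ 2 + y ^ 2 / t - 2 * x * y = (t * x - y) ^ 2 / t := by field_simp; ring
    nlinarith [div_nonneg (sq_nonneg (t * x - y)) ht.le]
  calc 2 * (a ⬝ᵥ (B *ᵥ b)) = ∑ i, ∑ j, B i j * (2 * a i * b j) := by
        simp only [dotProduct, mulVec, Finset.mul_sum]
        exact Finset.sum_congr rfl fun i _ => Finset.sum_congr rfl fun j _ => by ring
    _ ≤ ∑ i, ∑ j, B i j * (t * a i ^ 2 + b j ^ 2 / t) := by
        gcongr with i _ j _
        exacts [hB i j, amgm _ _]
    _ = t * r * (a ⬝ᵥ a) + c / t * (b ⬝ᵥ b) := by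
        simp only [mul_add, Finset.sum_add_distrib]
        rw [Finset.sum_comm (f := fun i j => B i j * (b j ^ 2 / t))]
        simp only [← Finset.sum_mul, hrow, hcol, dotProduct, Finset.mul_sum]
        congr 1 <;> exact Finset.sum_congr rfl fun _ _ => by ring

lemma dotProduct_fromBlocks_mulVec_le (hB : ∀ i j, 0 ≤ B i j) (hrow : ∀ i, ∑ j, B i j = r)
    (hcol : ∀ j, ∑ i, B i j = c) {α β μ : ℝ} (hα₀ : 0 < α) (hβ₀ : 0 < β) (hα : r * β = μ * α)
    (hβ : c * α = μ * β) (w : κ ⊕ ν → ℝ) :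
    w ⬝ᵥ (fromBlocks 0 B Bᵀ 0 *ᵥ w) ≤ μ * (w ⬝ᵥ w) := by
  have key := two_mul_dotProduct_mulVec_le_add hB hrow hcol (div_pos hβ₀ hα₀)
    (w ∘ Sum.inl) (w ∘ Sum.inr)
  have h₁ : β / α * r = μ := by field_simp; linarith
  have h₂ : c / (β / α) = μ := by field_simp; linarith
  rw [← Sum.elim_comp_inl_inr w, sumElim_dotProduct_fromBlocks_mulVec, sumElim_dotProduct_sumElim]
  rw [h₁, h₂] at key
  linarith

theorem two_mul_dotProduct_mulVec_le_of_sum_eq_zero [DecidableEq κ] [DecidableEq ν] [Nonempty κ]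
    [Nonempty ν] (hB : ∀ i j, 0 ≤ B i j) (hrow : ∀ i, ∑ j, B i j = r)
    (hcol : ∀ j, ∑ i, B i j = c) (hrc : r * Fintype.card κ = c * Fintype.card ν) {n : ℕ}
    (hcard : Fintype.card κ + Fintype.card ν = n) (hn : 1 < n) {z : Fin n → κ ⊕ ν → ℝ}
    (hz : ∀ i j, z i ⬝ᵥ z j = if i = j then 1 else 0) {lam : Fin n → ℝ}
    (heig : ∀ i, fromBlocks 0 B Bᵀ 0 *ᵥ z i = lam i • z i) (hlam : Antitone lam)
    {a : κ → ℝ} {b : ν → ℝ} (ha : ∑ i, a i = 0) (hb : ∑ j, b j = 0) :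
    2 * (a ⬝ᵥ (B *ᵥ b)) ≤ lam ⟨1, hn⟩ * (a ⬝ᵥ a + b ⬝ᵥ b) := by
  have hκ : (0 : ℝ) < Fintype.card κ := Nat.cast_pos.mpr Fintype.card_pos
  have hν : (0 : ℝ) < Fintype.card ν := Nat.cast_pos.mpr Fintype.card_pos
  set μ := r * √(Fintype.card κ) / √(Fintype.card ν)
  have hα : r * √(Fintype.card κ) = μ * √(Fintype.card ν) := by
    simp only [μ]
    field_simp
  have hβ : c * √(Fintype.card ν) = μ * √(Fintype.card κ) := by
    simp only [μ]
    field_simp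
    rw [Real.sq_sqrt hκ.le, Real.sq_sqrt hν.le, hrc]
  set p : κ ⊕ ν → ℝ := Sum.elim (fun _ => √(Fintype.card ν)) (fun _ => √(Fintype.card κ))
  have hp : fromBlocks 0 B Bᵀ 0 *ᵥ p = μ • p := fromBlocks_mulVec_sumElim_const hrow hcol hα hβ
  have hp₀ : p ≠ 0 := fun h => by
    simpa [p, hκ.ne'] using congrFun h (Sum.inr (Classical.arbitrary ν))
  have hμ : lam ⟨0, by omega⟩ ≤ μ :=
    le_of_mulVec_eq_smul_of_forall_dotProduct_mulVec_le (heig _)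
      (fun h => by simpa [h] using hz ⟨0, by omega⟩ ⟨0, by omega⟩)
      (dotProduct_fromBlocks_mulVec_le hB hrow hcol (by positivity) (by positivity) hα hβ)
  have hpw : p ⬝ᵥ Sum.elim a b = 0 := by
    simp [p, dotProduct, ← Finset.mul_sum, ha, hb]
  have := dotProduct_mulVec_le_of_orthogonal_eigenvector (by simp [hcard]) hn hz heig hlam hp hp₀
    hμ hpw
  rwa [sumElim_dotProduct_fromBlocks_mulVec, sumElim_dotProduct_sumElim] at this

end Bipartite

end Matrix

section CenteredIndicator

variable {κ : Type*} [Fintype κ] [DecidableEq κ]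

noncomputable def centeredIndicator (S : Finset κ) (i : κ) : ℝ :=
  (if i ∈ S then 1 else 0) - #S / Fintype.card κ

lemma sum_centeredIndicator (S : Finset κ) : ∑ i, centeredIndicator S i = 0 := by
  rcases isEmpty_or_nonempty κ with hκ | hκ
  · simp
  · simp [centeredIndicator, Finset.sum_sub_distrib, mul_div_cancel₀, Fintype.card_ne_zero]

lemma centeredIndicator_dotProduct_self (S : Finset κ) :
    centeredIndicator S ⬝ᵥ centeredIndicator S = #S * (Fintype.card κ - #S) / Fintype.card κ := by
  rcases isEmpty_or_nonempty κ with hκ | hκ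
  · simp
  have hsq : ∀ i, centeredIndicator S i * centeredIndicator S i =
      (1 - 2 * (#S / Fintype.card κ)) * (if i ∈ S then 1 else 0) + (#S / Fintype.card κ) ^ 2 := by
    intro i; by_cases h : i ∈ S <;> simp [centeredIndicator, h] <;> ring
  simp only [dotProduct, hsq, Finset.sum_add_distrib, ← Finset.mul_sum, Finset.sum_boole]
  simp only [subset_univ, filter_mem_eq_of_subset, sum_const, card_univ, nsmul_eq_mul]
  field_simp
  ring

variable {ν : Type*} [Fintype ν] [DecidableEq ν]

lemma centeredIndicator_dotProduct_mulVec {B : Matrix κ ν ℝ} {r c : ℝ}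
    (hrow : ∀ i, ∑ j, B i j = r) (hcol : ∀ j, ∑ i, B i j = c) (X : Finset κ) (Y : Finset ν) :
    centeredIndicator X ⬝ᵥ (B *ᵥ centeredIndicator Y) =
      ∑ i ∈ X, ∑ j ∈ Y, B i j - c * #X * #Y / Fintype.card κ := by
  set f : κ → ℝ := fun i => ∑ j ∈ Y, B i j
  have hBy : B *ᵥ centeredIndicator Y = fun i => f i - #Y / Fintype.card ν * r := by
    ext i
    simp only [mulVec, dotProduct, centeredIndicator, mul_sub, Finset.sum_sub_distrib, mul_ite,
      mul_one, mul_zero, Finset.sum_ite_mem, Finset.univ_inter, ← Finset.sum_mul, hrow, f]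
    ring
  have hf : ∑ i, f i = #Y * c := by
    calc ∑ i, f i = ∑ j ∈ Y, ∑ i, B i j := Finset.sum_comm
      _ = #Y * c := by simp [hcol]
  calc centeredIndicator X ⬝ᵥ (B *ᵥ centeredIndicator Y)
      = centeredIndicator X ⬝ᵥ f - #Y / Fintype.card ν * r * ∑ i, centeredIndicator X i := by
        simp only [hBy, dotProduct, mul_sub, Finset.sum_sub_distrib, Finset.mul_sum]
        congr 1
        exact Finset.sum_congr rfl fun _ _ => by ring
    _ = ∑ i ∈ X, f i - #X / Fintype.card κ * ∑ i, f i := by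
        rw [sum_centeredIndicator, mul_zero, sub_zero]
        simp only [dotProduct, centeredIndicator,
          sub_mul, Finset.sum_sub_distrib, ite_mul, one_mul, zero_mul, Finset.sum_ite_mem,
          Finset.univ_inter, Finset.mul_sum]
    _ = _ := by rw [hf]; ring

end CenteredIndicator

/-- Isoperimetric inequality for bi-regular bipartite graphs.  The graph has
parts of sizes `Nk`, `Nm`, `L` links, and adjacency matrix
`A = [[0, B], [Bᵀ, 0]]` where every row sum of `B` is `L/Nk` and every column
sum is `L/Nm`.  The eigenvalues of `A` are `lam 0 ≥ lam 1 ≥ …` (so `lam 1` is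
`λ₂`), realized by an orthonormal eigenbasis `z`.  For subsets `X ⊆ V_k`,
`Y ⊆ V_m`, the number `m` of links between `X` and `Y` satisfies the stated
bound. -/
theorem isoperimetric_inequality_biregular
    (Nk Nm : ℕ) (hNk : 0 < Nk) (hNm : 0 < Nm)
    (L : ℝ)
    (B : Matrix (Fin Nk) (Fin Nm) ℝ)
    (hB01 : ∀ i j, B i j = 0 ∨ B i j = 1)
    (hBrow : B.mulVec (fun _ => 1) = fun _ => L / Nk)
    (hBcol : Matrix.vecMul (fun _ => 1) B = fun _ => L / Nm)
    (A : Matrix (Fin Nk ⊕ Fin Nm) (Fin Nk ⊕ Fin Nm) ℝ)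
    (hA : A = Matrix.fromBlocks 0 B Bᵀ 0)
    (lam : Fin (Nk + Nm) → ℝ)
    (z : Fin (Nk + Nm) → (Fin Nk ⊕ Fin Nm → ℝ))
    (hz_orth : ∀ i j, z i ⬝ᵥ z j = if i = j then (1 : ℝ) else 0)
    (hz_eig : ∀ i, A.mulVec (z i) = lam i • z i)
    (hlam_mono : Antitone lam)
    (X : Finset (Fin Nk)) (Y : Finset (Fin Nm))
    (Nx Ny : ℝ) (hNx : Nx = X.card) (hNy : Ny = Y.card)
    (m : ℝ) (hm : m = ∑ i ∈ X, ∑ j ∈ Y, B i j) :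
    (m - (L / (Nk * Nm)) * Nx * Ny) ^ 2 ≤
      (lam ⟨1, by omega⟩) ^ 2 *
        (Nx * (Nk - Nx) * (Ny * (Nm - Ny))) / (Nk * Nm) := by
  subst hA hNx hNy hm
  have : Nonempty (Fin Nk) := ⟨⟨0, hNk⟩⟩
  have : Nonempty (Fin Nm) := ⟨⟨0, hNm⟩⟩
  have hB : ∀ i j, 0 ≤ B i j := fun i j => by rcases hB01 i j with h | h <;> simp [h]
  have hrow : ∀ i, ∑ j, B i j = L / Nk := fun i => by
    simpa [mulVec, dotProduct] using congrFun hBrow i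
  have hcol : ∀ j, ∑ i, B i j = L / Nm := fun j => by
    simpa [vecMul, dotProduct] using congrFun hBcol j
  set x := centeredIndicator X
  set y := centeredIndicator Y
  have hL : L / Nk * Fintype.card (Fin Nk) = L / Nm * Fintype.card (Fin Nm) := by
    simp only [Fintype.card_fin]
    field_simp
  have hquad : ∀ s : ℝ,
      2 * s * (x ⬝ᵥ (B *ᵥ y)) ≤ lam ⟨1, by omega⟩ * (s ^ 2 * (x ⬝ᵥ x) + y ⬝ᵥ y) := fun s => by
    have := two_mul_dotProduct_mulVec_le_of_sum_eq_zero hB hrow hcol hL (by simp) (by omega)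
      hz_orth hz_eig hlam_mono (a := s • x)
      (by simp [x, ← Finset.mul_sum, sum_centeredIndicator]) (sum_centeredIndicator Y)
    simp only [smul_dotProduct, dotProduct_smul, smul_eq_mul] at this
    linarith
  have hbound := sq_le_of_forall_two_mul_mul_le hquad
  rw [centeredIndicator_dotProduct_mulVec hrow hcol, centeredIndicator_dotProduct_self,
    centeredIndicator_dotProduct_self] at hbound
  simp only [Fintype.card_fin] at hbound
  convert hbound using 1 <;> ring
end
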